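/- arXiv:2206.01426 — 2 statements merged into one kernel-verified Lean document; each statement's English description precedes it below -/
import Mathlib

section
/- Let H ≥ 1, d_x, d_u ≥ 1, W > 0, R_𝓜 > 0, let M ∈ ℝ^{d_u × H d_x} with ‖M‖_F ≤ R_𝓜, let V be a positive definite matrix of size H d_u + (H−1) d_x with V ⪰ 2 W² R_𝓜² H² · I, and let Σ ∈ ℝ^{d_x × d_x} be positive semidefinite with ‖Σ‖ ≤ W². Write A = V^{−1/2} P(M) (I_{2H−1} ⊗ Σ)^{1/2}, where I_{2H−1} ⊗ Σ is the block-diagonal matrix with 2H−1 diagonal blocks equal to Σ. Then 2 ‖A‖_∞ ≤ √(2/H) · (1 + √(d_x)/R_𝓜); in particular, for every matrix entry index κ of A and every sign χ ∈ {−1, +1}: ‖A‖_∞ − χ · A_κ ≤ √(2/H) · (1 + √(d_x)/R_𝓜). -/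
open scoped BigOperators

noncomputable section

/-- Row index type of the block matrix `P(M)`. -/
abbrev PRowIdx (H dx du : ℕ) := (Fin H × Fin du) ⊕ (Fin (H - 1) × Fin dx)

/-- Column index type of the block matrix `P(M)`. -/
abbrev PColIdx (H dx : ℕ) := Fin (2 * H - 1) × Fin dx

/-- The block matrix `P(M)` built from the blocks `M^{[1]},…,M^{[H]}` (here `M h`
denotes the block `M^{[h]}` for `1 ≤ h ≤ H`). -/
def Pmat (H dx du : ℕ) (M : ℕ → Matrix (Fin du) (Fin dx) ℝ) :
    Matrix (PRowIdx H dx du) (PColIdx H dx) ℝ :=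
  fun r c =>
    match r with
    | Sum.inl (j, i) =>
        if (j : ℕ) ≤ (c.1 : ℕ) ∧ (c.1 : ℕ) ≤ (j : ℕ) + (H - 1) then
          M (H - ((c.1 : ℕ) - (j : ℕ))) i c.2
        else 0
    | Sum.inr (j, i) => if (c.1 : ℕ) = H + (j : ℕ) ∧ i = c.2 then 1 else 0

/-- The Kronecker product `I_{2H−1} ⊗ Σ`: block-diagonal with `2H−1` copies of `Σ`. -/
def kronIdSigma (H dx : ℕ) (Sig : Matrix (Fin dx) (Fin dx) ℝ) :
    Matrix (PColIdx H dx) (PColIdx H dx) ℝ :=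
  fun a b => if a.1 = b.1 then Sig a.2 b.2 else 0

/-- The spectral (ℓ₂ operator) norm of a real matrix. -/
noncomputable def specNorm {m n : Type*} [Fintype m] [Fintype n] [DecidableEq n]
    (A : Matrix m n ℝ) : ℝ :=
  ‖LinearMap.toContinuousLinearMap (Matrix.toEuclideanLin A)‖

/-- The entrywise maximum absolute value of a real matrix. -/
noncomputable def entryMax {m n : Type*} [Fintype m] [Fintype n]
    (A : Matrix m n ℝ) : ℝ :=
  ⨆ i, ⨆ j, |A i j|

section Aux

open Matrix

/-- For a symmetric real matrix, a vector can be moved across the dot product. -/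
lemma symmDot {n : Type*} [Fintype n] (S : Matrix n n ℝ) (hS : Sᵀ = S)
    (a b : n → ℝ) : (S *ᵥ a) ⬝ᵥ b = a ⬝ᵥ (S *ᵥ b) := by
  rw [dotProduct_comm, dotProduct_mulVec, ← mulVec_transpose, hS, dotProduct_comm]

lemma transpose_eq_self_of_posSemidef {n : Type*} [Fintype n] {S : Matrix n n ℝ}
    (h : S.PosSemidef) : Sᵀ = S := by
  rw [← conjTranspose_eq_transpose_of_trivial]; exact h.isHermitian

lemma quad_lower {n : Type*} [Fintype n] [DecidableEq n]
    {V : Matrix n n ℝ} {c : ℝ}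
    (h : (V - c • (1 : Matrix n n ℝ)).PosSemidef) (x : n → ℝ) :
    c * (x ⬝ᵥ x) ≤ x ⬝ᵥ (V *ᵥ x) := by
  have h2 := h.dotProduct_mulVec_nonneg x
  simp only [star_trivial, sub_mulVec, dotProduct_sub, smul_mulVec, one_mulVec,
    dotProduct_smul, smul_eq_mul] at h2
  linarith

open scoped MatrixOrder in
/-- Diagonal entries of the inverse of a matrix bounded below by `c • 1` are at most `1/c`. -/
lemma inv_diag_le {n : Type*} [Fintype n] [DecidableEq n]
    {V : Matrix n n ℝ} (hV : V.PosDef) {c : ℝ} (hc : 0 < c)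
    (h : (V - c • (1 : Matrix n n ℝ)).PosSemidef) (r : n) :
    V⁻¹ r r ≤ 1 / c := by
  classical
  set y : n → ℝ := fun i => V⁻¹ i r with hy
  have hVy : V *ᵥ y = fun i => (1 : Matrix n n ℝ) i r := by
    funext i
    have h1 : (V * V⁻¹) i r = (1 : Matrix n n ℝ) i r := by
      rw [Matrix.mul_nonsing_inv _ hV.det_pos.ne'.isUnit]
    simpa [Matrix.mul_apply, Matrix.mulVec, dotProduct, hy] using h1
  set S := CFC.sqrt V with hSdef
  have hSS : S * S = V := CFC.sqrt_mul_sqrt_self V hV.posSemidef.nonneg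
  have hSt : Sᵀ = S := transpose_eq_self_of_posSemidef (CFC.sqrt_nonneg V).posSemidef
  have hVt : Vᵀ = V := transpose_eq_self_of_posSemidef hV.posSemidef
  have key := quad_lower h (S *ᵥ y)
  have e1 : (S *ᵥ y) ⬝ᵥ (S *ᵥ y) = y ⬝ᵥ (V *ᵥ y) := by
    rw [symmDot S hSt, mulVec_mulVec, hSS]
  have e2 : (S *ᵥ y) ⬝ᵥ (V *ᵥ (S *ᵥ y)) = (V *ᵥ y) ⬝ᵥ (V *ᵥ y) := by
    rw [symmDot S hSt, symmDot V hVt, mulVec_mulVec, mulVec_mulVec, mulVec_mulVec]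
    congr 2
    rw [← hSS]
    simp only [Matrix.mul_assoc]
  have e3 : (V *ᵥ y) ⬝ᵥ (V *ᵥ y) = 1 := by
    rw [hVy]
    simp [dotProduct, Matrix.one_apply]
  have e4 : y ⬝ᵥ (V *ᵥ y) = V⁻¹ r r := by
    rw [hVy]
    simp [dotProduct, Matrix.one_apply, hy]
  rw [e1, e2, e3, e4] at key
  rw [le_div_iff₀ hc]
  linarith

set_option maxHeartbeats 1000000 in
/-- Quadratic form bound for the block matrix `P(M)`. -/
lemma Pmat_quad_bound (H dx du : ℕ) (hH : 1 ≤ H)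
    (M : ℕ → Matrix (Fin du) (Fin dx) ℝ) (F : ℝ)
    (hMF : ∑ h ∈ Finset.Icc 1 H, ∑ i, ∑ j, (M h i j) ^ 2 ≤ F)
    (y : PColIdx H dx → ℝ) :
    ∑ r, ((Pmat H dx du M) *ᵥ y) r ^ 2 ≤ ((H : ℝ) * F + 1) * ∑ c, y c ^ 2 := by
  classical
  have hy2 : (0:ℝ) ≤ ∑ c, y c ^ 2 := by positivity
  -- per-row bound for the Toeplitz part
  have hrow : ∀ (j : Fin H) (i : Fin du),
      ((Pmat H dx du M) *ᵥ y) (Sum.inl (j, i)) ^ 2 ≤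
        (∑ h ∈ Finset.Icc 1 H, ∑ c2, (M h i c2) ^ 2) * ∑ c, y c ^ 2 := by
    intro j i
    have hcs := Finset.sum_mul_sq_le_sq_mul_sq Finset.univ
        (fun c => Pmat H dx du M (Sum.inl (j, i)) c) y
    have hPy : ((Pmat H dx du M) *ᵥ y) (Sum.inl (j, i)) =
        ∑ c, Pmat H dx du M (Sum.inl (j, i)) c * y c := rfl
    have hsq : ∑ c : PColIdx H dx, (Pmat H dx du M (Sum.inl (j, i)) c) ^ 2 ≤
        ∑ h ∈ Finset.Icc 1 H, ∑ c2, (M h i c2) ^ 2 := by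
      rw [Fintype.sum_prod_type]
      have step1 : ∀ k : Fin (2 * H - 1),
          ∑ c2, (Pmat H dx du M (Sum.inl (j, i)) (k, c2)) ^ 2
            = if (j : ℕ) ≤ (k : ℕ) ∧ (k : ℕ) ≤ (j : ℕ) + (H - 1) then
                ∑ c2, (M (H - ((k : ℕ) - (j : ℕ))) i c2) ^ 2 else 0 := by
        intro k
        by_cases hk : (j : ℕ) ≤ (k : ℕ) ∧ (k : ℕ) ≤ (j : ℕ) + (H - 1)
        · simp [Pmat, hk]
        · simp [Pmat, hk]
      simp_rw [step1]
      rw [← Finset.sum_filter]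
      have hinj : ∀ k1 ∈ Finset.filter
            (fun k : Fin (2 * H - 1) => (j : ℕ) ≤ (k : ℕ) ∧ (k : ℕ) ≤ (j : ℕ) + (H - 1))
            Finset.univ, ∀ k2 ∈ Finset.filter
            (fun k : Fin (2 * H - 1) => (j : ℕ) ≤ (k : ℕ) ∧ (k : ℕ) ≤ (j : ℕ) + (H - 1))
            Finset.univ,
          H - ((k1 : ℕ) - (j : ℕ)) = H - ((k2 : ℕ) - (j : ℕ)) → k1 = k2 := by
        intro k1 hk1 k2 hk2 hEq
        simp only [Finset.mem_filter, Finset.mem_univ, true_and] at hk1 hk2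
        have : (k1 : ℕ) = (k2 : ℕ) := by omega
        exact Fin.ext this
      calc ∑ k ∈ Finset.filter
            (fun k : Fin (2 * H - 1) => (j : ℕ) ≤ (k : ℕ) ∧ (k : ℕ) ≤ (j : ℕ) + (H - 1))
            Finset.univ, ∑ c2, (M (H - ((k : ℕ) - (j : ℕ))) i c2) ^ 2
          = ∑ h ∈ (Finset.filter
            (fun k : Fin (2 * H - 1) => (j : ℕ) ≤ (k : ℕ) ∧ (k : ℕ) ≤ (j : ℕ) + (H - 1))
            Finset.univ).image (fun k : Fin (2 * H - 1) => H - ((k : ℕ) - (j : ℕ))),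
              ∑ c2, (M h i c2) ^ 2 :=
            (Finset.sum_image (f := fun h => ∑ c2, (M h i c2) ^ 2) hinj).symm
        _ ≤ ∑ h ∈ Finset.Icc 1 H, ∑ c2, (M h i c2) ^ 2 := by
            apply Finset.sum_le_sum_of_subset_of_nonneg
            · intro h hmem
              simp only [Finset.mem_image, Finset.mem_filter, Finset.mem_univ, true_and] at hmem
              obtain ⟨k, ⟨hk1, hk2⟩, hkE⟩ := hmem
              rw [Finset.mem_Icc]
              omega
            · intro h _ _
              positivity
    calc ((Pmat H dx du M) *ᵥ y) (Sum.inl (j, i)) ^ 2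
        = (∑ c, Pmat H dx du M (Sum.inl (j, i)) c * y c) ^ 2 := by rw [hPy]
      _ ≤ (∑ c : PColIdx H dx, (Pmat H dx du M (Sum.inl (j, i)) c) ^ 2) * ∑ c, y c ^ 2 := hcs
      _ ≤ (∑ h ∈ Finset.Icc 1 H, ∑ c2, (M h i c2) ^ 2) * ∑ c, y c ^ 2 := by
          exact mul_le_mul_of_nonneg_right hsq hy2
  -- sum of the Toeplitz part
  have part1 : ∑ p : Fin H × Fin du, ((Pmat H dx du M) *ᵥ y) (Sum.inl p) ^ 2 ≤
      (H : ℝ) * F * ∑ c, y c ^ 2 := by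
    calc ∑ p : Fin H × Fin du, ((Pmat H dx du M) *ᵥ y) (Sum.inl p) ^ 2
        ≤ ∑ p : Fin H × Fin du, (∑ h ∈ Finset.Icc 1 H, ∑ c2, (M h p.2 c2) ^ 2) * ∑ c, y c ^ 2 :=
          Finset.sum_le_sum fun p _ => hrow p.1 p.2
      _ = (H : ℝ) * ((∑ i, ∑ h ∈ Finset.Icc 1 H, ∑ c2, (M h i c2) ^ 2) * ∑ c, y c ^ 2) := by
          rw [Fintype.sum_prod_type, Finset.sum_mul]
          simp [Finset.sum_const, mul_comm]
      _ ≤ (H : ℝ) * (F * ∑ c, y c ^ 2) := by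
          have hcomm : (∑ i, ∑ h ∈ Finset.Icc 1 H, ∑ c2, (M h i c2) ^ 2) =
              ∑ h ∈ Finset.Icc 1 H, ∑ i, ∑ c2, (M h i c2) ^ 2 := Finset.sum_comm
          have hle : (∑ i, ∑ h ∈ Finset.Icc 1 H, ∑ c2, (M h i c2) ^ 2) ≤ F := by
            rw [hcomm]; exact hMF
          have hH0 : (0:ℝ) ≤ (H : ℝ) := by positivity
          exact mul_le_mul_of_nonneg_left (mul_le_mul_of_nonneg_right hle hy2) hH0
      _ = (H : ℝ) * F * ∑ c, y c ^ 2 := by ring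
  -- the identity part
  have part2 : ∑ q : Fin (H - 1) × Fin dx, ((Pmat H dx du M) *ᵥ y) (Sum.inr q) ^ 2 ≤
      ∑ c, y c ^ 2 := by
    have hval : ∀ q : Fin (H - 1) × Fin dx,
        ((Pmat H dx du M) *ᵥ y) (Sum.inr q) =
          y (⟨H + (q.1 : ℕ), by omega⟩, q.2) := by
      rintro ⟨j, i⟩
      have hk0 : H + (j : ℕ) < 2 * H - 1 := by omega
      set k0 : Fin (2 * H - 1) := ⟨H + (j : ℕ), hk0⟩ with hk0def
      have hPy : ((Pmat H dx du M) *ᵥ y) (Sum.inr (j, i)) =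
          ∑ c, Pmat H dx du M (Sum.inr (j, i)) c * y c := rfl
      rw [hPy]
      have hterm : ∀ c : PColIdx H dx,
          Pmat H dx du M (Sum.inr (j, i)) c * y c =
            if c = (k0, i) then y c else 0 := by
        rintro ⟨k, c2⟩
        by_cases hc : (k : ℕ) = H + (j : ℕ) ∧ i = c2
        · obtain ⟨h1, h2⟩ := hc
          have hkk : k = k0 := Fin.ext (by simpa [hk0def] using h1)
          subst hkk; subst h2
          simp [Pmat, h1]
        · have hne : (k, c2) ≠ (k0, i) := by
            intro hEq
            apply hc
            obtain ⟨hEq1, hEq2⟩ := Prod.mk.injEq .. ▸ hEq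
            injection hEq with hl hr
            constructor
            · rw [hl]
            · rw [hr]
          have hP0 : Pmat H dx du M (Sum.inr (j, i)) (k, c2) = 0 := by
            simp only [Pmat]
            rw [if_neg hc]
          simp [hP0, hne]
      simp_rw [hterm]
      rw [Finset.sum_ite_eq' Finset.univ ((k0, i) : PColIdx H dx) (fun c => y c)]
      simp
    have hφinj : ∀ q1 ∈ (Finset.univ : Finset (Fin (H - 1) × Fin dx)),
        ∀ q2 ∈ (Finset.univ : Finset (Fin (H - 1) × Fin dx)),
        ((⟨H + (q1.1 : ℕ), by omega⟩ : Fin (2 * H - 1)), q1.2) =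
          ((⟨H + (q2.1 : ℕ), by omega⟩ : Fin (2 * H - 1)), q2.2) → q1 = q2 := by
      rintro ⟨j1, i1⟩ _ ⟨j2, i2⟩ _ hEq
      injection hEq with h1 h2
      have h1' : H + (j1 : ℕ) = H + (j2 : ℕ) := congrArg Fin.val h1
      have : (j1 : ℕ) = (j2 : ℕ) := by omega
      exact Prod.ext (Fin.ext this) h2
    calc ∑ q : Fin (H - 1) × Fin dx, ((Pmat H dx du M) *ᵥ y) (Sum.inr q) ^ 2
        = ∑ q : Fin (H - 1) × Fin dx,
            y ((⟨H + (q.1 : ℕ), by omega⟩ : Fin (2 * H - 1)), q.2) ^ 2 := by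
          apply Finset.sum_congr rfl
          intro q _
          rw [hval q]
      _ = ∑ c ∈ Finset.univ.image
            (fun q : Fin (H - 1) × Fin dx =>
              ((⟨H + (q.1 : ℕ), by omega⟩ : Fin (2 * H - 1)), q.2)), y c ^ 2 :=
          (Finset.sum_image (f := fun c => y c ^ 2) hφinj).symm
      _ ≤ ∑ c, y c ^ 2 := by
          apply Finset.sum_le_sum_of_subset_of_nonneg (Finset.subset_univ _)
          intro c _ _
          positivity
  calc ∑ r, ((Pmat H dx du M) *ᵥ y) r ^ 2
      = (∑ p : Fin H × Fin du, ((Pmat H dx du M) *ᵥ y) (Sum.inl p) ^ 2) +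
        ∑ q : Fin (H - 1) × Fin dx, ((Pmat H dx du M) *ᵥ y) (Sum.inr q) ^ 2 :=
        Fintype.sum_sum_type _
    _ ≤ (H : ℝ) * F * ∑ c, y c ^ 2 + ∑ c, y c ^ 2 := add_le_add part1 part2
    _ = ((H : ℝ) * F + 1) * ∑ c, y c ^ 2 := by ring

/-- Diagonal entries are bounded by the spectral norm. -/
lemma diag_le_specNorm {n : Type*} [Fintype n] [DecidableEq n]
    (Sig : Matrix n n ℝ) (j : n) : Sig j j ≤ specNorm Sig := by
  classical
  set L := LinearMap.toContinuousLinearMap (Matrix.toEuclideanLin Sig) with hL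
  set x : EuclideanSpace ℝ n := EuclideanSpace.single j (1 : ℝ) with hx
  have hxn : ‖x‖ = 1 := by simp [hx]
  have hinner : inner (𝕜 := ℝ) x (L x) = Sig j j := by
    rw [hx, EuclideanSpace.inner_single_left]
    have hLx : (L (EuclideanSpace.single j (1 : ℝ))) j = Sig j j := by
      show (Matrix.toEuclideanLin Sig (EuclideanSpace.single j (1:ℝ))) j = Sig j j
      rw [Matrix.toEuclideanLin_apply]
      show (Sig *ᵥ (WithLp.equiv 2 (n → ℝ)) (EuclideanSpace.single j (1:ℝ))) j = Sig j j
      simp [Matrix.mulVec, dotProduct, EuclideanSpace.single_apply]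
    rw [hLx]
    simp
  calc Sig j j = inner (𝕜 := ℝ) x (L x) := hinner.symm
    _ ≤ |inner (𝕜 := ℝ) x (L x)| := le_abs_self _
    _ ≤ ‖x‖ * ‖L x‖ := abs_real_inner_le_norm _ _
    _ ≤ ‖x‖ * (‖L‖ * ‖x‖) := by
        apply mul_le_mul_of_nonneg_left (L.le_opNorm x) (norm_nonneg _)
    _ = ‖L‖ := by rw [hxn]; ring

end Aux

open Matrix in
set_option maxHeartbeats 1000000 in
/-- Entrywise bound for the exploration-bonus matrix
`A = V^{−1/2} P(M) (I_{2H−1} ⊗ Σ)^{1/2}`: `2 ‖A‖_∞ ≤ √(2/H) (1 + √d_x / R_𝓜)`; in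
particular `‖A‖_∞ − χ A_κ ≤ √(2/H) (1 + √d_x / R_𝓜)` for every entry index `κ` and
sign `χ ∈ {−1,+1}`. -/
theorem bonus_entry_bound (H dx du : ℕ) (hH : 1 ≤ H) (hdx : 1 ≤ dx) (hdu : 1 ≤ du)
    (W RM : ℝ) (hW : 0 < W) (hRM : 0 < RM)
    (M : ℕ → Matrix (Fin du) (Fin dx) ℝ)
    (hM : Real.sqrt (∑ h ∈ Finset.Icc 1 H, ∑ i, ∑ j, (M h i j) ^ 2) ≤ RM)
    (V : Matrix (PRowIdx H dx du) (PRowIdx H dx du) ℝ) (hV : V.PosDef)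
    (hVlower : (V - (2 * W ^ 2 * RM ^ 2 * (H : ℝ) ^ 2) •
      (1 : Matrix (PRowIdx H dx du) (PRowIdx H dx du) ℝ)).PosSemidef)
    (Sig : Matrix (Fin dx) (Fin dx) ℝ) (hSig : Sig.PosSemidef)
    (hSigW : specNorm Sig ≤ W ^ 2)
    (Ssqrt : Matrix (PColIdx H dx) (PColIdx H dx) ℝ)
    (hSsqrtPSD : Ssqrt.PosSemidef) (hSsqrt : Ssqrt * Ssqrt = kronIdSigma H dx Sig)
    (Vinvsqrt : Matrix (PRowIdx H dx du) (PRowIdx H dx du) ℝ)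
    (hVinvsqrtPSD : Vinvsqrt.PosSemidef) (hVinvsqrt : Vinvsqrt * Vinvsqrt = V⁻¹) :
    2 * entryMax (Vinvsqrt * Pmat H dx du M * Ssqrt) ≤
        Real.sqrt (2 / H) * (1 + Real.sqrt dx / RM) ∧
      ∀ (r : PRowIdx H dx du) (c : PColIdx H dx) (χ : ℝ), χ = 1 ∨ χ = -1 →
        entryMax (Vinvsqrt * Pmat H dx du M * Ssqrt) -
            χ * (Vinvsqrt * Pmat H dx du M * Ssqrt) r c ≤
          Real.sqrt (2 / H) * (1 + Real.sqrt dx / RM) := by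
  classical
  have hHpos : (0:ℝ) < (H:ℝ) := by exact_mod_cast hH
  have hH1 : (1:ℝ) ≤ (H:ℝ) := by exact_mod_cast hH
  set A := Vinvsqrt * Pmat H dx du M * Ssqrt with hAdef
  set B := Real.sqrt (2 / H) * (1 + Real.sqrt dx / RM) with hBdef
  set s := Real.sqrt dx with hsdef
  have hs0 : 0 ≤ s := Real.sqrt_nonneg _
  have hs1 : 1 ≤ s := by
    have h1 : (1:ℝ) ≤ (dx:ℝ) := by exact_mod_cast hdx
    nlinarith [Real.sq_sqrt (show (0:ℝ) ≤ (dx:ℝ) by positivity)]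
  have hBnn : 0 ≤ B := by
    rw [hBdef]
    have : 0 ≤ 1 + s / RM := by positivity
    exact mul_nonneg (Real.sqrt_nonneg _) this
  set c₀ : ℝ := 2 * W ^ 2 * RM ^ 2 * (H : ℝ) ^ 2 with hc₀def
  have hc₀ : 0 < c₀ := by rw [hc₀def]; positivity
  -- Frobenius bound
  have hsum0 : (0:ℝ) ≤ ∑ h ∈ Finset.Icc 1 H, ∑ i, ∑ j, (M h i j) ^ 2 := by positivity
  have hFrob : ∑ h ∈ Finset.Icc 1 H, ∑ i, ∑ j, (M h i j) ^ 2 ≤ RM ^ 2 := by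
    calc ∑ h ∈ Finset.Icc 1 H, ∑ i, ∑ j, (M h i j) ^ 2
        = (Real.sqrt (∑ h ∈ Finset.Icc 1 H, ∑ i, ∑ j, (M h i j) ^ 2)) ^ 2 :=
          (Real.sq_sqrt hsum0).symm
      _ ≤ RM ^ 2 := pow_le_pow_left₀ (Real.sqrt_nonneg _) hM 2
  -- symmetry facts
  have hWsym : ∀ a b, Vinvsqrt a b = Vinvsqrt b a := by
    intro a b
    have h := transpose_eq_self_of_posSemidef hVinvsqrtPSD
    have := congrFun (congrFun h b) a
    simpa [Matrix.transpose_apply] using this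
  have hSsym : ∀ a b, Ssqrt a b = Ssqrt b a := by
    intro a b
    have h := transpose_eq_self_of_posSemidef hSsqrtPSD
    have := congrFun (congrFun h b) a
    simpa [Matrix.transpose_apply] using this
  -- entry bound
  have hentry : ∀ (r : PRowIdx H dx du) (c : PColIdx H dx), |A r c| ≤ B / 2 := by
    intro r c
    set ycol : PColIdx H dx → ℝ := fun c' => Ssqrt c' c with hycoldef
    set w : PRowIdx H dx du → ℝ := (Pmat H dx du M) *ᵥ ycol with hwdef
    have hArc : A r c = ∑ r', Vinvsqrt r r' * w r' := by
      rw [hAdef, Matrix.mul_assoc, Matrix.mul_apply]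
      refine Finset.sum_congr rfl fun r' _ => rfl
    have hcs := Finset.sum_mul_sq_le_sq_mul_sq Finset.univ (fun r' => Vinvsqrt r r') w
    have hu : ∑ r', (Vinvsqrt r r') ^ 2 = V⁻¹ r r := by
      rw [← hVinvsqrt, Matrix.mul_apply]
      apply Finset.sum_congr rfl
      intro r' _
      have h := hWsym r' r
      rw [h, sq]
    have hVrr : V⁻¹ r r ≤ 1 / c₀ := inv_diag_le hV hc₀ hVlower r
    have hycolsq : ∑ c', ycol c' ^ 2 = Sig c.2 c.2 := by
      have h1 : ∑ c', ycol c' ^ 2 = (Ssqrt * Ssqrt) c c := by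
        rw [Matrix.mul_apply]
        apply Finset.sum_congr rfl
        intro c' _
        have h := hSsym c c'
        rw [hycoldef]
        simp only []
        rw [sq, h]
      rw [h1, hSsqrt, kronIdSigma]
      simp
    have hSigd : Sig c.2 c.2 ≤ W ^ 2 := le_trans (diag_le_specNorm Sig c.2) hSigW
    have hwsq : ∑ r', w r' ^ 2 ≤ ((H : ℝ) * RM ^ 2 + 1) * W ^ 2 := by
      have h1 := Pmat_quad_bound H dx du hH M (RM ^ 2) hFrob ycol
      have h2 : ∑ c', ycol c' ^ 2 ≤ W ^ 2 := by rw [hycolsq]; exact hSigd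
      have h3 : (0:ℝ) ≤ (H : ℝ) * RM ^ 2 + 1 := by positivity
      calc ∑ r', w r' ^ 2 ≤ ((H : ℝ) * RM ^ 2 + 1) * ∑ c', ycol c' ^ 2 := h1
        _ ≤ ((H : ℝ) * RM ^ 2 + 1) * W ^ 2 := mul_le_mul_of_nonneg_left h2 h3
    have hsq : (A r c) ^ 2 ≤ (1 / c₀) * (((H : ℝ) * RM ^ 2 + 1) * W ^ 2) := by
      have hw0 : (0:ℝ) ≤ ∑ r', w r' ^ 2 := by positivity
      calc (A r c) ^ 2 = (∑ r', Vinvsqrt r r' * w r') ^ 2 := by rw [hArc]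
        _ ≤ (∑ r', (Vinvsqrt r r') ^ 2) * ∑ r', w r' ^ 2 := hcs
        _ = V⁻¹ r r * ∑ r', w r' ^ 2 := by rw [hu]
        _ ≤ (1 / c₀) * (((H : ℝ) * RM ^ 2 + 1) * W ^ 2) := by
            exact mul_le_mul hVrr hwsq hw0 (by positivity)
    -- numeric comparison
    have hB2 : B ^ 2 = 2 / (H:ℝ) * (1 + s / RM) ^ 2 := by
      rw [hBdef, mul_pow, Real.sq_sqrt (by positivity : (0:ℝ) ≤ 2 / (H:ℝ))]
    have hcmp : (1 / c₀) * (((H : ℝ) * RM ^ 2 + 1) * W ^ 2) ≤ (B / 2) ^ 2 := by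
      have hkey : 4 * (((H : ℝ) * RM ^ 2 + 1) * W ^ 2) ≤ c₀ * (2 / (H:ℝ) * (1 + s / RM) ^ 2) := by
        have he : (1 + s / RM) ^ 2 = (RM + s) ^ 2 / RM ^ 2 := by
          field_simp
        have he2 : c₀ * (2 / (H:ℝ) * ((RM + s) ^ 2 / RM ^ 2)) =
            4 * W ^ 2 * (H:ℝ) * (RM + s) ^ 2 := by
          rw [hc₀def]
          field_simp
          ring
        rw [he, he2]
        have hHs : 1 ≤ (H:ℝ) * s ^ 2 := by nlinarith [hH1, hs1, hs0]
        have hRs : (0:ℝ) ≤ (H:ℝ) * RM * s := by positivity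
        nlinarith [mul_nonneg (sq_nonneg W) (sub_nonneg.mpr hHs),
          mul_nonneg (sq_nonneg W) hRs]
      have hq : (B / 2) ^ 2 = (2 / (H:ℝ) * (1 + s / RM) ^ 2) / 4 := by
        rw [div_pow, hB2]; norm_num
      rw [hq, one_div, inv_mul_eq_div, div_le_div_iff₀ hc₀ (by norm_num : (0:ℝ) < 4)]
      nlinarith [hkey]
    have hB2nn : 0 ≤ B / 2 := by linarith
    calc |A r c| = Real.sqrt ((A r c) ^ 2) := (Real.sqrt_sq_eq_abs _).symm
      _ ≤ Real.sqrt ((B / 2) ^ 2) := Real.sqrt_le_sqrt (le_trans hsq hcmp)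
      _ = B / 2 := Real.sqrt_sq hB2nn
  -- sup bound
  haveI : Nonempty (Fin H) := ⟨⟨0, by omega⟩⟩
  haveI : Nonempty (Fin du) := ⟨⟨0, by omega⟩⟩
  haveI : Nonempty (Fin dx) := ⟨⟨0, by omega⟩⟩
  haveI : Nonempty (Fin (2 * H - 1)) := ⟨⟨0, by omega⟩⟩
  have hmax : entryMax A ≤ B / 2 := by
    rw [entryMax]
    exact ciSup_le fun r => ciSup_le fun c => hentry r c
  have hle : ∀ (r : PRowIdx H dx du) (c : PColIdx H dx), |A r c| ≤ entryMax A := by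
    intro r c
    have h1 : |A r c| ≤ ⨆ c', |A r c'| :=
      le_ciSup (f := fun c' => |A r c'|) (Set.Finite.bddAbove (Set.finite_range _)) c
    have h2 : (⨆ c', |A r c'|) ≤ entryMax A :=
      le_ciSup (f := fun r' => ⨆ c', |A r' c'|) (Set.Finite.bddAbove (Set.finite_range _)) r
    exact h1.trans h2
  constructor
  · linarith [hmax]
  · intro r c χ hχ
    have h1 : -(χ * A r c) ≤ |A r c| := by
      rcases hχ with h | h
      · rw [h]; simpa using neg_le_abs (A r c)
      · rw [h]; simpa using le_abs_self (A r c)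
    have h2 := hentry r c
    linarith [hmax, h2, h1]
end
end

section
/- Let H ≥ 1, d_x, d_u ≥ 1, κ ≥ 1, 0 < γ ≤ 1, R_B ≥ 1, R_𝓜 ≥ 1, W > 0. Let A⋆ ∈ ℝ^{d_x×d_x} be (κ,γ)-strongly stable and B⋆ ∈ ℝ^{d_x×d_u} with ‖B⋆‖ ≤ R_B, let c : ℝ^{d_x} × ℝ^{d_u} → ℝ be 1-Lipschitz, and let M ∈ ℝ^{d_u × H d_x} with ‖M‖_F ≤ R_𝓜. For a family of vectors w = (w_{t−2H}, …, w_{t−1}) in ℝ^{d_x} with ‖w_r‖ ≤ W, define u_s(M; w) = Σ_{h=1}^{H} M^{[h]} w_{s−h} for s ∈ {t−H,…,t} (interpreting any needed index within {t−2H,…,t−1}), x_t(M; w) = Σ_{h=1}^{H} A⋆^{h−1} (B⋆ u_{t−h}(M; w) + w_{t−h}), and f_t(M; w) = c(x_t(M; w), u_t(M; w)). Then for any two such families w, w': |f_t(M; w) − f_t(M; w')| ≤ √3 · κ γ^{−1} R_B R_𝓜 · ‖(w_{t−2H},…,w_{t−1}) − (w'_{t−2H},…,w'_{t−1})‖, and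 consequently |f_t(M; w) − f_t(M; w')| ≤ 5 κ γ^{−1} R_B R_𝓜 W √H. -/
open scoped BigOperators

noncomputable section

/-- A matrix `A` is `(κ,γ)`-strongly stable if `A = Q L Q⁻¹` for some invertible `Q`
with `‖L‖ ≤ 1 − γ` and `‖Q‖ ‖Q⁻¹‖ ≤ κ`. -/
def StronglyStable {dx : ℕ} (κ γ : ℝ) (A : Matrix (Fin dx) (Fin dx) ℝ) : Prop :=
  ∃ Q L : Matrix (Fin dx) (Fin dx) ℝ,
    IsUnit Q.det ∧ A = Q * L * Q⁻¹ ∧ specNorm L ≤ 1 - γ ∧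
      specNorm Q * specNorm Q⁻¹ ≤ κ

namespace SCAux

/-- Euclidean norm of a plain vector. -/
noncomputable def en {n : ℕ} (v : Fin n → ℝ) : ℝ := Real.sqrt (∑ i, v i ^ 2)

lemma en_nonneg {n : ℕ} (v : Fin n → ℝ) : 0 ≤ en v := Real.sqrt_nonneg _

lemma sq_en {n : ℕ} (v : Fin n → ℝ) : en v ^ 2 = ∑ i, v i ^ 2 :=
  Real.sq_sqrt (Finset.sum_nonneg fun _ _ => sq_nonneg _)

lemma en_eq_norm {n : ℕ} (v : Fin n → ℝ) :
    en v = ‖(WithLp.equiv 2 (Fin n → ℝ)).symm v‖ := by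
  rw [EuclideanSpace.norm_eq]; simp [en, sq_abs]

lemma en_mulVec_le {m n : ℕ} (A : Matrix (Fin m) (Fin n) ℝ) (v : Fin n → ℝ) :
    en (A.mulVec v) ≤ specNorm A * en v := by
  rw [en_eq_norm, en_eq_norm]
  exact (LinearMap.toContinuousLinearMap (Matrix.toEuclideanLin A)).le_opNorm ((WithLp.equiv 2 (Fin n → ℝ)).symm v)

lemma specNorm_nonneg {m n : Type*} [Fintype m] [Fintype n] [DecidableEq n]
    (A : Matrix m n ℝ) : 0 ≤ specNorm A := norm_nonneg _

lemma specNorm_le_bound {m n : ℕ} (A : Matrix (Fin m) (Fin n) ℝ) {C : ℝ} (hC : 0 ≤ C)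
    (h : ∀ v, en (A.mulVec v) ≤ C * en v) : specNorm A ≤ C := by
  apply ContinuousLinearMap.opNorm_le_bound _ hC
  intro x
  have h2 := h ((WithLp.equiv 2 (Fin n → ℝ)) x)
  rw [en_eq_norm, en_eq_norm, Equiv.symm_apply_apply] at h2
  simpa [Matrix.toEuclideanLin_apply] using h2

lemma en_add_le {n : ℕ} (a b : Fin n → ℝ) : en (a + b) ≤ en a + en b := by
  simp only [en_eq_norm]
  rw [show (WithLp.equiv 2 (Fin n → ℝ)).symm (a + b)
      = (WithLp.equiv 2 (Fin n → ℝ)).symm a + (WithLp.equiv 2 (Fin n → ℝ)).symm b from rfl]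
  exact norm_add_le _ _

lemma en_sub_le {n : ℕ} (a b : Fin n → ℝ) : en (a - b) ≤ en a + en b := by
  simp only [en_eq_norm]
  rw [show (WithLp.equiv 2 (Fin n → ℝ)).symm (a - b)
      = (WithLp.equiv 2 (Fin n → ℝ)).symm a - (WithLp.equiv 2 (Fin n → ℝ)).symm b from rfl]
  exact norm_sub_le _ _

lemma en_sum_le {n : ℕ} {ι : Type*} (s : Finset ι) (f : ι → Fin n → ℝ) :
    en (∑ i ∈ s, f i) ≤ ∑ i ∈ s, en (f i) := by
  classical
  induction s using Finset.induction_on with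
  | empty => simp [en]
  | insert _ _ h ih =>
    rw [Finset.sum_insert h, Finset.sum_insert h]
    exact (en_add_le _ _).trans (by linarith)

lemma specNorm_mul_le {m n p : ℕ} (A : Matrix (Fin m) (Fin n) ℝ) (B : Matrix (Fin n) (Fin p) ℝ) :
    specNorm (A * B) ≤ specNorm A * specNorm B := by
  apply specNorm_le_bound _ (mul_nonneg (specNorm_nonneg _) (specNorm_nonneg _))
  intro v
  rw [← Matrix.mulVec_mulVec]
  calc en (A.mulVec (B.mulVec v)) ≤ specNorm A * en (B.mulVec v) := en_mulVec_le _ _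
    _ ≤ specNorm A * (specNorm B * en v) :=
        mul_le_mul_of_nonneg_left (en_mulVec_le _ _) (specNorm_nonneg _)
    _ = specNorm A * specNorm B * en v := by ring

lemma specNorm_one_le {n : ℕ} : specNorm (1 : Matrix (Fin n) (Fin n) ℝ) ≤ 1 := by
  apply specNorm_le_bound _ zero_le_one
  intro v; rw [Matrix.one_mulVec, one_mul]

lemma specNorm_pow_le {n : ℕ} (A : Matrix (Fin n) (Fin n) ℝ) {r : ℝ} (hr : 0 ≤ r)
    (hA : specNorm A ≤ r) (k : ℕ) : specNorm (A ^ k) ≤ r ^ k := by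
  induction k with
  | zero => simpa using specNorm_one_le
  | succ k ih =>
    rw [pow_succ, pow_succ]
    exact (specNorm_mul_le _ _).trans
      (mul_le_mul ih hA (specNorm_nonneg _) (pow_nonneg hr _))

lemma specNorm_le_frobenius {m n : ℕ} (A : Matrix (Fin m) (Fin n) ℝ) :
    specNorm A ≤ Real.sqrt (∑ i, ∑ j, A i j ^ 2) := by
  apply specNorm_le_bound _ (Real.sqrt_nonneg _)
  intro v
  have key : ∑ i, (A.mulVec v i) ^ 2 ≤ (∑ i, ∑ j, A i j ^ 2) * ∑ j, v j ^ 2 := by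
    rw [Finset.sum_mul]
    refine Finset.sum_le_sum fun i _ => ?_
    simpa [Matrix.mulVec, dotProduct] using
      Finset.sum_mul_sq_le_sq_mul_sq Finset.univ (fun j => A i j) v
  calc en (A.mulVec v) ≤ Real.sqrt ((∑ i, ∑ j, A i j ^ 2) * ∑ j, v j ^ 2) :=
        Real.sqrt_le_sqrt key
    _ = Real.sqrt (∑ i, ∑ j, A i j ^ 2) * en v := by
        rw [Real.sqrt_mul (x := ∑ i, ∑ j, A i j ^ 2) (Finset.sum_nonneg fun i _ => Finset.sum_nonneg fun j _ => sq_nonneg _)]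
        rfl

lemma cs_sum {ι : Type*} (s : Finset ι) (a b : ι → ℝ) :
    ∑ i ∈ s, a i * b i ≤ Real.sqrt (∑ i ∈ s, a i ^ 2) * Real.sqrt (∑ i ∈ s, b i ^ 2) := by
  have h := Finset.sum_mul_sq_le_sq_mul_sq s a b
  calc ∑ i ∈ s, a i * b i ≤ |∑ i ∈ s, a i * b i| := le_abs_self _
    _ = Real.sqrt ((∑ i ∈ s, a i * b i) ^ 2) := (Real.sqrt_sq_eq_abs _).symm
    _ ≤ Real.sqrt ((∑ i ∈ s, a i ^ 2) * ∑ i ∈ s, b i ^ 2) := Real.sqrt_le_sqrt h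
    _ = _ := Real.sqrt_mul (Finset.sum_nonneg fun i _ => sq_nonneg _) _

lemma two_cs {a b X Y : ℝ} (ha : 0 ≤ a) (hb : 0 ≤ b) (hX : 0 ≤ X) (hY : 0 ≤ Y) :
    a * Real.sqrt X + b * Real.sqrt Y ≤ Real.sqrt (a ^ 2 + b ^ 2) * Real.sqrt (X + Y) := by
  have hsum : 0 ≤ a * Real.sqrt X + b * Real.sqrt Y :=
    add_nonneg (mul_nonneg ha (Real.sqrt_nonneg _)) (mul_nonneg hb (Real.sqrt_nonneg _))
  have hsq : (a * Real.sqrt X + b * Real.sqrt Y) ^ 2 ≤ (a ^ 2 + b ^ 2) * (X + Y) := by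
    nlinarith [Real.sq_sqrt hX, Real.sq_sqrt hY, Real.sqrt_nonneg X, Real.sqrt_nonneg Y,
      sq_nonneg (a * Real.sqrt Y - b * Real.sqrt X)]
  calc a * Real.sqrt X + b * Real.sqrt Y
      = Real.sqrt ((a * Real.sqrt X + b * Real.sqrt Y) ^ 2) := (Real.sqrt_sq hsum).symm
    _ ≤ Real.sqrt ((a ^ 2 + b ^ 2) * (X + Y)) := Real.sqrt_le_sqrt hsq
    _ = _ := Real.sqrt_mul (by positivity) _

lemma geom_le {γ : ℝ} (hγ0 : 0 < γ) (hγ1 : γ ≤ 1) (H : ℕ) :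
    ∑ h ∈ Finset.Icc 1 H, (1 - γ) ^ (h - 1) ≤ γ⁻¹ := by
  have h1 : ∑ h ∈ Finset.Icc 1 H, (1 - γ) ^ (h - 1) = ∑ i ∈ Finset.range H, (1 - γ) ^ i := by
    rw [← Finset.Ico_add_one_right_eq_Icc, Finset.sum_Ico_eq_sum_range]
    simp
  rw [h1, inv_eq_one_div, le_div_iff₀ hγ0]
  have h2 := geom_sum_mul (1 - γ) H
  have h3 : (0:ℝ) ≤ (1 - γ) ^ H := pow_nonneg (by linarith) H
  nlinarith [h2]

lemma stronglyStable_pow {dx : ℕ} {κ γ : ℝ} {A : Matrix (Fin dx) (Fin dx) ℝ}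
    (hA : StronglyStable κ γ A) (hκ : 1 ≤ κ) (hγ1 : γ ≤ 1) (k : ℕ) :
    specNorm (A ^ k) ≤ κ * (1 - γ) ^ k := by
  obtain ⟨Q, L, hdet, hQL, hL, hκQ⟩ := hA
  have hQQ : Q⁻¹ * Q = 1 := Matrix.nonsing_inv_mul _ hdet
  have hQQ' : Q * Q⁻¹ = 1 := Matrix.mul_nonsing_inv _ hdet
  have hpow : A ^ k = Q * L ^ k * Q⁻¹ := by
    induction k with
    | zero => simp [hQQ']
    | succ k ih =>
      rw [pow_succ, ih, hQL, pow_succ]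
      have h4 : Q * L ^ k * Q⁻¹ * (Q * L * Q⁻¹) = Q * L ^ k * (Q⁻¹ * Q) * L * Q⁻¹ := by
        noncomm_ring
      rw [h4, hQQ]
      noncomm_ring
  have h1γ : (0:ℝ) ≤ 1 - γ := by linarith
  have hLk : specNorm (L ^ k) ≤ (1 - γ) ^ k := specNorm_pow_le L h1γ hL k
  rw [hpow]
  calc specNorm (Q * L ^ k * Q⁻¹) ≤ specNorm (Q * L ^ k) * specNorm Q⁻¹ :=
        specNorm_mul_le _ _
    _ ≤ specNorm Q * specNorm (L ^ k) * specNorm Q⁻¹ :=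
        mul_le_mul_of_nonneg_right (specNorm_mul_le _ _) (specNorm_nonneg _)
    _ = specNorm Q * specNorm Q⁻¹ * specNorm (L ^ k) := by ring
    _ ≤ κ * (1 - γ) ^ k :=
        mul_le_mul hκQ hLk (specNorm_nonneg _) (by linarith)

lemma sum_reindex_le {f : ℤ → ℝ} (hf : ∀ r, 0 ≤ f r) (s : Finset ℕ) (g : ℕ → ℤ)
    (hg : Set.InjOn g s) (T : Finset ℤ) (hsub : ∀ h ∈ s, g h ∈ T) :
    ∑ h ∈ s, f (g h) ≤ ∑ r ∈ T, f r := by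
  rw [← Finset.sum_image (fun a ha b hb => hg ha hb)]
  exact Finset.sum_le_sum_of_subset_of_nonneg
    (Finset.image_subset_iff.mpr hsub) (fun r _ _ => hf r)

end SCAux

set_option maxHeartbeats 2000000

/-- Lipschitz continuity of the truncated surrogate cost in the
disturbances: with `u_s(M;w) = ∑_h M^{[h]} w_{s−h}`,
`x_t(M;w) = ∑_{h=1}^H A⋆^{h−1}(B⋆ u_{t−h}(M;w) + w_{t−h})`, and
`f_t(M;w) = c(x_t(M;w), u_t(M;w))`:
`|f_t(M;w) − f_t(M;w')| ≤ √3 κ γ⁻¹ R_B R_𝓜 ‖w_{t−2H:t−1} − w'_{t−2H:t−1}‖`, and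
consequently `|f_t(M;w) − f_t(M;w')| ≤ 5 κ γ⁻¹ R_B R_𝓜 W √H`. -/
theorem surrogate_cost_disturbance_lipschitz
    (H dx du : ℕ) (hH : 1 ≤ H) (hdx : 1 ≤ dx) (hdu : 1 ≤ du)
    (κ γ RB RM W : ℝ) (hκ : 1 ≤ κ) (hγ0 : 0 < γ) (hγ1 : γ ≤ 1)
    (hRB : 1 ≤ RB) (hRM : 1 ≤ RM) (hW : 0 < W)
    (Astar : Matrix (Fin dx) (Fin dx) ℝ) (hAstar : StronglyStable κ γ Astar)
    (Bstar : Matrix (Fin dx) (Fin du) ℝ) (hBstar : specNorm Bstar ≤ RB)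
    (c : (Fin dx → ℝ) → (Fin du → ℝ) → ℝ)
    (hc : ∀ x u x' u', |c x u - c x' u'| ≤
      Real.sqrt ((∑ i, (x i - x' i) ^ 2) + ∑ j, (u j - u' j) ^ 2))
    (M : ℕ → Matrix (Fin du) (Fin dx) ℝ)
    (hM : Real.sqrt (∑ h ∈ Finset.Icc 1 H, ∑ i, ∑ j, (M h i j) ^ 2) ≤ RM)
    (t : ℤ) (w w' : ℤ → Fin dx → ℝ)
    (hw : ∀ r ∈ Finset.Icc (t - 2 * H) (t - 1), Real.sqrt (∑ i, (w r i) ^ 2) ≤ W)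
    (hw' : ∀ r ∈ Finset.Icc (t - 2 * H) (t - 1), Real.sqrt (∑ i, (w' r i) ^ 2) ≤ W) :
    |c (∑ h ∈ Finset.Icc 1 H, (Astar ^ (h - 1)).mulVec
          (Bstar.mulVec (∑ h' ∈ Finset.Icc 1 H, (M h').mulVec (w (t - h - h'))) +
            w (t - h)))
        (∑ h ∈ Finset.Icc 1 H, (M h).mulVec (w (t - h))) -
      c (∑ h ∈ Finset.Icc 1 H, (Astar ^ (h - 1)).mulVec
          (Bstar.mulVec (∑ h' ∈ Finset.Icc 1 H, (M h').mulVec (w' (t - h - h'))) +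
            w' (t - h)))
        (∑ h ∈ Finset.Icc 1 H, (M h).mulVec (w' (t - h)))| ≤
        Real.sqrt 3 * κ * γ⁻¹ * RB * RM *
          Real.sqrt (∑ r ∈ Finset.Icc (t - 2 * H) (t - 1), ∑ i, (w r i - w' r i) ^ 2) ∧
      |c (∑ h ∈ Finset.Icc 1 H, (Astar ^ (h - 1)).mulVec
            (Bstar.mulVec (∑ h' ∈ Finset.Icc 1 H, (M h').mulVec (w (t - h - h'))) +
              w (t - h)))
          (∑ h ∈ Finset.Icc 1 H, (M h).mulVec (w (t - h))) -
        c (∑ h ∈ Finset.Icc 1 H, (Astar ^ (h - 1)).mulVec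
            (Bstar.mulVec (∑ h' ∈ Finset.Icc 1 H, (M h').mulVec (w' (t - h - h'))) +
              w' (t - h)))
          (∑ h ∈ Finset.Icc 1 H, (M h).mulVec (w' (t - h)))| ≤
        5 * κ * γ⁻¹ * RB * RM * W * Real.sqrt H := by
  classical
  have hκ0 : (0:ℝ) ≤ κ := by linarith
  have hRB0 : (0:ℝ) ≤ RB := by linarith
  have hRM0 : (0:ℝ) ≤ RM := by linarith
  have hγiv0 : (0:ℝ) ≤ γ⁻¹ := inv_nonneg.mpr hγ0.le
  have hγiv1 : (1:ℝ) ≤ γ⁻¹ := by rw [inv_eq_one_div, le_div_iff₀ hγ0]; linarith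
  have h1γ : (0:ℝ) ≤ 1 - γ := by linarith
  have hK0 : 0 ≤ κ * γ⁻¹ * RB * RM :=
    mul_nonneg (mul_nonneg (mul_nonneg hκ0 hγiv0) hRB0) hRM0
  set Fw := Finset.Icc (t - 2 * (H:ℤ)) (t - 1) with hFw
  set S := ∑ r ∈ Fw, ∑ i, (w r i - w' r i) ^ 2 with hSdef
  have hS0 : 0 ≤ S := by
    rw [hSdef]; exact Finset.sum_nonneg fun r _ => Finset.sum_nonneg fun i _ => sq_nonneg _
  set x1 := ∑ h ∈ Finset.Icc 1 H, (Astar ^ (h - 1)).mulVec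
      (Bstar.mulVec (∑ h' ∈ Finset.Icc 1 H, (M h').mulVec (w (t - h - h'))) +
        w (t - h)) with hx1
  set x2 := ∑ h ∈ Finset.Icc 1 H, (Astar ^ (h - 1)).mulVec
      (Bstar.mulVec (∑ h' ∈ Finset.Icc 1 H, (M h').mulVec (w' (t - h - h'))) +
        w' (t - h)) with hx2
  set u1 := ∑ h ∈ Finset.Icc 1 H, (M h).mulVec (w (t - h)) with hu1
  set u2 := ∑ h ∈ Finset.Icc 1 H, (M h).mulVec (w' (t - h)) with hu2
  set D : ℤ → Fin dx → ℝ := fun r => w r - w' r with hD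
  set xd : Fin dx → ℝ := ∑ h ∈ Finset.Icc 1 H, (Astar ^ (h - 1)).mulVec
      (Bstar.mulVec (∑ h' ∈ Finset.Icc 1 H, (M h').mulVec (D (t - h - h'))) +
        D (t - h)) with hxd
  set ud : Fin du → ℝ := ∑ h ∈ Finset.Icc 1 H, (M h).mulVec (D (t - h)) with hud
  -- difference identities
  have hUdiff : ∀ s : ℤ, (∑ h' ∈ Finset.Icc 1 H, (M h').mulVec (w (s - h')))
      - (∑ h' ∈ Finset.Icc 1 H, (M h').mulVec (w' (s - h')))
      = ∑ h' ∈ Finset.Icc 1 H, (M h').mulVec (D (s - h')) := by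
    intro s
    rw [← Finset.sum_sub_distrib]
    refine Finset.sum_congr rfl fun h' _ => ?_
    rw [← Matrix.mulVec_sub]
  have hxdiff : x1 - x2 = xd := by
    rw [hx1, hx2, hxd, ← Finset.sum_sub_distrib]
    refine Finset.sum_congr rfl fun h _ => ?_
    have e := hUdiff (t - (h:ℤ))
    have e2 :  (Bstar.mulVec (∑ h' ∈ Finset.Icc 1 H, (M h').mulVec (w (t - h - h'))) + w (t - h))
          - (Bstar.mulVec (∑ h' ∈ Finset.Icc 1 H, (M h').mulVec (w' (t - h - h'))) + w' (t - h))
        = Bstar.mulVec (∑ h' ∈ Finset.Icc 1 H, (M h').mulVec (D (t - h - h'))) + D (t - h) := by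
      rw [← e, Matrix.mulVec_sub]
      simp only [hD]
      abel
    rw [← Matrix.mulVec_sub, e2]
  have hudiff : u1 - u2 = ud := by
    rw [hu1, hu2, hud]; exact hUdiff t
  have h1 := hc x1 u1 x2 u2
  have ex : ∑ i, (x1 i - x2 i) ^ 2 = ∑ i, xd i ^ 2 :=
    Finset.sum_congr rfl fun i _ => by
      rw [show x1 i - x2 i = xd i from by rw [← hxdiff]; rfl]
  have eu : ∑ j, (u1 j - u2 j) ^ 2 = ∑ j, ud j ^ 2 :=
    Finset.sum_congr rfl fun j _ => by
      rw [show u1 j - u2 j = ud j from by rw [← hudiff]; rfl]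
  rw [ex, eu] at h1
  -- Frobenius control of the M blocks
  have hRMs : Real.sqrt (∑ h' ∈ Finset.Icc 1 H, specNorm (M h') ^ 2) ≤ RM := by
    refine (Real.sqrt_le_sqrt ?_).trans hM
    refine Finset.sum_le_sum fun h' _ => ?_
    calc specNorm (M h') ^ 2 ≤ Real.sqrt (∑ i, ∑ j, (M h' i j) ^ 2) ^ 2 :=
          pow_le_pow_left₀ (SCAux.specNorm_nonneg _) (SCAux.specNorm_le_frobenius (M h')) 2
      _ = ∑ i, ∑ j, (M h' i j) ^ 2 := Real.sq_sqrt (by positivity)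
  -- generic bound for control differences
  have hUcore : ∀ g : ℕ → ℤ, SCAux.en (∑ h' ∈ Finset.Icc 1 H, (M h').mulVec (D (g h')))
      ≤ RM * Real.sqrt (∑ h' ∈ Finset.Icc 1 H, ∑ i, (D (g h') i) ^ 2) := by
    intro g
    calc SCAux.en (∑ h' ∈ Finset.Icc 1 H, (M h').mulVec (D (g h')))
        ≤ ∑ h' ∈ Finset.Icc 1 H, SCAux.en ((M h').mulVec (D (g h'))) := SCAux.en_sum_le _ _
      _ ≤ ∑ h' ∈ Finset.Icc 1 H, specNorm (M h') * SCAux.en (D (g h')) :=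
          Finset.sum_le_sum fun h' _ => SCAux.en_mulVec_le _ _
      _ ≤ Real.sqrt (∑ h' ∈ Finset.Icc 1 H, specNorm (M h') ^ 2)
            * Real.sqrt (∑ h' ∈ Finset.Icc 1 H, SCAux.en (D (g h')) ^ 2) :=
          SCAux.cs_sum _ _ _
      _ ≤ RM * Real.sqrt (∑ h' ∈ Finset.Icc 1 H, ∑ i, (D (g h') i) ^ 2) := by
          refine mul_le_mul hRMs (le_of_eq ?_) (Real.sqrt_nonneg _) hRM0
          congr 1
          exact Finset.sum_congr rfl fun h' _ => SCAux.sq_en _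
  have hDr0 : ∀ r : ℤ, 0 ≤ ∑ i, (D r i) ^ 2 := fun r => Finset.sum_nonneg fun i _ => sq_nonneg _
  have hSd : S = ∑ r ∈ Fw, ∑ i, (D r i) ^ 2 := by
    rw [hSdef]
    exact Finset.sum_congr rfl fun r _ => Finset.sum_congr rfl fun i _ => by simp [hD]
  have hreidx : ∀ (s : Finset ℕ) (g : ℕ → ℤ), Set.InjOn g s → (∀ a ∈ s, g a ∈ Fw) →
      ∑ h' ∈ s, ∑ i, (D (g h') i) ^ 2 ≤ S := by
    intro s g hinj hmem
    rw [hSd]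
    exact SCAux.sum_reindex_le (f := fun r => ∑ i, (D r i) ^ 2) hDr0 s g hinj Fw hmem
  -- bound on ud
  have hud_le : SCAux.en ud ≤ RM * Real.sqrt S := by
    rw [hud]
    refine (hUcore (fun h' => t - (h':ℤ))).trans ?_
    refine mul_le_mul_of_nonneg_left (Real.sqrt_le_sqrt ?_) hRM0
    refine hreidx _ _ ?_ ?_
    · intro a _ b _ hab; simp only at hab; omega
    · intro a ha
      rw [hFw]
      simp only [Finset.mem_Icc] at ha ⊢
      omega
  -- per-step bound on the state contributions
  have hterm : ∀ h ∈ Finset.Icc 1 H,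
      SCAux.en (Bstar.mulVec (∑ h' ∈ Finset.Icc 1 H, (M h').mulVec (D (t - h - h'))) + D (t - h))
        ≤ Real.sqrt (RB ^ 2 * RM ^ 2 + 1) * Real.sqrt S := by
    intro h hh
    rw [Finset.mem_Icc] at hh
    have hX10 : 0 ≤ ∑ h' ∈ Finset.Icc 1 H, ∑ i, (D (t - h - h') i) ^ 2 :=
      Finset.sum_nonneg fun _ _ => hDr0 _
    have hY10 : 0 ≤ ∑ i, (D (t - (h:ℤ)) i) ^ 2 := hDr0 _
    have hXY : (∑ h' ∈ Finset.Icc 1 H, ∑ i, (D (t - h - h') i) ^ 2)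
        + ∑ i, (D (t - (h:ℤ)) i) ^ 2 ≤ S := by
      have h0 : (0:ℕ) ∉ Finset.Icc 1 H := by simp
      have h2 := hreidx (insert 0 (Finset.Icc 1 H)) (fun a : ℕ => t - (h:ℤ) - (a:ℤ))
        (by intro a _ b _ hab; simp only at hab; omega)
        (by
          intro a ha
          simp only [Finset.mem_insert, Finset.mem_Icc] at ha
          rw [hFw]
          simp only [Finset.mem_Icc]
          omega)
      rw [Finset.sum_insert h0] at h2
      simp only [Nat.cast_zero, sub_zero] at h2
      linarith
    have hu1b : SCAux.en (∑ h' ∈ Finset.Icc 1 H, (M h').mulVec (D (t - h - h')))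
        ≤ RM * Real.sqrt (∑ h' ∈ Finset.Icc 1 H, ∑ i, (D (t - h - h') i) ^ 2) :=
      hUcore (fun h' => t - (h:ℤ) - (h':ℤ))
    calc SCAux.en (Bstar.mulVec (∑ h' ∈ Finset.Icc 1 H, (M h').mulVec (D (t - h - h'))) + D (t - h))
        ≤ SCAux.en (Bstar.mulVec (∑ h' ∈ Finset.Icc 1 H, (M h').mulVec (D (t - h - h'))))
          + SCAux.en (D (t - h)) := SCAux.en_add_le _ _
      _ ≤ RB * RM * Real.sqrt (∑ h' ∈ Finset.Icc 1 H, ∑ i, (D (t - h - h') i) ^ 2)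
          + 1 * Real.sqrt (∑ i, (D (t - (h:ℤ)) i) ^ 2) := by
          refine add_le_add ?_ ?_
          · calc SCAux.en (Bstar.mulVec (∑ h' ∈ Finset.Icc 1 H, (M h').mulVec (D (t - h - h'))))
                ≤ specNorm Bstar
                  * SCAux.en (∑ h' ∈ Finset.Icc 1 H, (M h').mulVec (D (t - h - h'))) :=
                  SCAux.en_mulVec_le _ _
              _ ≤ RB * (RM * Real.sqrt (∑ h' ∈ Finset.Icc 1 H, ∑ i, (D (t - h - h') i) ^ 2)) :=
                  mul_le_mul hBstar hu1b (SCAux.en_nonneg _) hRB0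
              _ = RB * RM * Real.sqrt (∑ h' ∈ Finset.Icc 1 H, ∑ i, (D (t - h - h') i) ^ 2) := by
                  ring
          · rw [one_mul]
            exact le_of_eq rfl
      _ ≤ Real.sqrt ((RB * RM) ^ 2 + 1 ^ 2)
          * Real.sqrt ((∑ h' ∈ Finset.Icc 1 H, ∑ i, (D (t - h - h') i) ^ 2)
            + ∑ i, (D (t - (h:ℤ)) i) ^ 2) :=
          SCAux.two_cs (by positivity) zero_le_one hX10 hY10
      _ ≤ Real.sqrt (RB ^ 2 * RM ^ 2 + 1) * Real.sqrt S := by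
          rw [show (RB * RM) ^ 2 + 1 ^ 2 = RB ^ 2 * RM ^ 2 + 1 by ring]
          exact mul_le_mul_of_nonneg_left (Real.sqrt_le_sqrt hXY) (Real.sqrt_nonneg _)
  -- bound on xd
  have hCS0 : 0 ≤ Real.sqrt (RB ^ 2 * RM ^ 2 + 1) * Real.sqrt S := by positivity
  have hxd_le : SCAux.en xd ≤ κ * γ⁻¹ * (Real.sqrt (RB ^ 2 * RM ^ 2 + 1) * Real.sqrt S) := by
    rw [hxd]
    calc SCAux.en (∑ h ∈ Finset.Icc 1 H, (Astar ^ (h - 1)).mulVec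
          (Bstar.mulVec (∑ h' ∈ Finset.Icc 1 H, (M h').mulVec (D (t - h - h'))) + D (t - h)))
        ≤ ∑ h ∈ Finset.Icc 1 H, SCAux.en ((Astar ^ (h - 1)).mulVec
          (Bstar.mulVec (∑ h' ∈ Finset.Icc 1 H, (M h').mulVec (D (t - h - h'))) + D (t - h))) :=
          SCAux.en_sum_le _ _
      _ ≤ ∑ h ∈ Finset.Icc 1 H, (1 - γ) ^ (h - 1)
            * (κ * (Real.sqrt (RB ^ 2 * RM ^ 2 + 1) * Real.sqrt S)) := by
          refine Finset.sum_le_sum fun h hh => ?_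
          refine (SCAux.en_mulVec_le _ _).trans ?_
          have hb := mul_le_mul (SCAux.stronglyStable_pow hAstar hκ hγ1 (h - 1)) (hterm h hh)
            (SCAux.en_nonneg _) (mul_nonneg hκ0 (pow_nonneg h1γ _))
          calc specNorm (Astar ^ (h - 1)) * SCAux.en
                (Bstar.mulVec (∑ h' ∈ Finset.Icc 1 H, (M h').mulVec (D (t - h - h'))) + D (t - h))
              ≤ κ * (1 - γ) ^ (h - 1)
                * (Real.sqrt (RB ^ 2 * RM ^ 2 + 1) * Real.sqrt S) := hb
            _ = (1 - γ) ^ (h - 1) * (κ * (Real.sqrt (RB ^ 2 * RM ^ 2 + 1) * Real.sqrt S)) := by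
                ring
      _ = (∑ h ∈ Finset.Icc 1 H, (1 - γ) ^ (h - 1))
            * (κ * (Real.sqrt (RB ^ 2 * RM ^ 2 + 1) * Real.sqrt S)) := by
          rw [Finset.sum_mul]
      _ ≤ γ⁻¹ * (κ * (Real.sqrt (RB ^ 2 * RM ^ 2 + 1) * Real.sqrt S)) :=
          mul_le_mul_of_nonneg_right (SCAux.geom_le hγ0 hγ1 H) (mul_nonneg hκ0 hCS0)
      _ = κ * γ⁻¹ * (Real.sqrt (RB ^ 2 * RM ^ 2 + 1) * Real.sqrt S) := by ring
  -- squared bounds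
  have hxd2 : SCAux.en xd ^ 2 ≤ κ ^ 2 * γ⁻¹ ^ 2 * (RB ^ 2 * RM ^ 2 + 1) * S := by
    calc SCAux.en xd ^ 2
        ≤ (κ * γ⁻¹ * (Real.sqrt (RB ^ 2 * RM ^ 2 + 1) * Real.sqrt S)) ^ 2 :=
          pow_le_pow_left₀ (SCAux.en_nonneg xd) hxd_le 2
      _ = κ ^ 2 * γ⁻¹ ^ 2 * (Real.sqrt (RB ^ 2 * RM ^ 2 + 1) ^ 2 * Real.sqrt S ^ 2) := by ring
      _ = κ ^ 2 * γ⁻¹ ^ 2 * (RB ^ 2 * RM ^ 2 + 1) * S := by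
          rw [Real.sq_sqrt (by positivity), Real.sq_sqrt hS0]; ring
  have hud2 : SCAux.en ud ^ 2 ≤ RM ^ 2 * S := by
    calc SCAux.en ud ^ 2 ≤ (RM * Real.sqrt S) ^ 2 :=
          pow_le_pow_left₀ (SCAux.en_nonneg ud) hud_le 2
      _ = RM ^ 2 * Real.sqrt S ^ 2 := by ring
      _ = RM ^ 2 * S := by rw [Real.sq_sqrt hS0]
  have hcoef : κ ^ 2 * γ⁻¹ ^ 2 * (RB ^ 2 * RM ^ 2 + 1) + RM ^ 2
      ≤ 3 * (κ * γ⁻¹ * RB * RM) ^ 2 := by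
    have hRBRM : 1 ≤ RB * RM := by
      calc (1:ℝ) = 1 * 1 := by ring
        _ ≤ RB * RM := mul_le_mul hRB hRM zero_le_one hRB0
    have hkg1 : 1 ≤ κ * γ⁻¹ := by
      calc (1:ℝ) = 1 * 1 := by ring
        _ ≤ κ * γ⁻¹ := mul_le_mul hκ hγiv1 zero_le_one hκ0
    have hkgb : 1 ≤ κ * γ⁻¹ * RB := by
      calc (1:ℝ) = 1 * 1 := by ring
        _ ≤ (κ * γ⁻¹) * RB := mul_le_mul hkg1 hRB zero_le_one (by linarith)
    have e1 : 1 ≤ (RB * RM) ^ 2 := by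
      calc (1:ℝ) = 1 ^ 2 := by ring
        _ ≤ (RB * RM) ^ 2 := pow_le_pow_left₀ zero_le_one hRBRM 2
    have e2 : 1 ≤ (κ * γ⁻¹ * RB) ^ 2 := by
      calc (1:ℝ) = 1 ^ 2 := by ring
        _ ≤ (κ * γ⁻¹ * RB) ^ 2 := pow_le_pow_left₀ zero_le_one hkgb 2
    nlinarith [mul_le_mul_of_nonneg_left e1 (sq_nonneg (κ * γ⁻¹)),
      mul_le_mul_of_nonneg_left e2 (sq_nonneg RM)]
  have hmain : |c x1 u1 - c x2 u2| ≤ Real.sqrt 3 * κ * γ⁻¹ * RB * RM * Real.sqrt S := by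
    refine h1.trans ?_
    calc Real.sqrt ((∑ i, xd i ^ 2) + ∑ j, ud j ^ 2)
        ≤ Real.sqrt (3 * (κ * γ⁻¹ * RB * RM) ^ 2 * S) := by
          apply Real.sqrt_le_sqrt
          rw [← SCAux.sq_en, ← SCAux.sq_en]
          have := mul_le_mul_of_nonneg_right hcoef hS0
          nlinarith [hxd2, hud2]
      _ = Real.sqrt 3 * κ * γ⁻¹ * RB * RM * Real.sqrt S := by
          rw [Real.sqrt_mul (by positivity), Real.sqrt_mul (by norm_num : (0:ℝ) ≤ 3),
            Real.sqrt_sq hK0]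
          ring
  -- second bound
  have hHr : (1:ℝ) ≤ (H:ℝ) := by exact_mod_cast hH
  have hcard : ((Fw.card : ℕ) : ℝ) = 2 * H := by
    rw [hFw, Int.card_Icc]
    rw [show t - 1 + 1 - (t - 2 * (H:ℤ)) = ((2 * H : ℕ) : ℤ) by push_cast; ring,
      Int.toNat_natCast]
    push_cast; ring
  have hSW : S ≤ (2 * (H:ℝ)) * (4 * W ^ 2) := by
    have hper : ∀ r ∈ Fw, ∑ i, (w r i - w' r i) ^ 2 ≤ 4 * W ^ 2 := by
      intro r hr
      have h3 : SCAux.en (w r - w' r) ≤ 2 * W := by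
        refine (SCAux.en_sub_le _ _).trans ?_
        have ha := hw r hr
        have hb := hw' r hr
        simp only [SCAux.en]
        linarith
      calc ∑ i, (w r i - w' r i) ^ 2 = SCAux.en (w r - w' r) ^ 2 := by
            rw [SCAux.sq_en]
            exact Finset.sum_congr rfl fun i _ => by simp
        _ ≤ (2 * W) ^ 2 := pow_le_pow_left₀ (SCAux.en_nonneg _) h3 2
        _ = 4 * W ^ 2 := by ring
    calc S = ∑ r ∈ Fw, ∑ i, (w r i - w' r i) ^ 2 := hSdef
      _ ≤ ∑ _r ∈ Fw, 4 * W ^ 2 := Finset.sum_le_sum hper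
      _ = (Fw.card : ℝ) * (4 * W ^ 2) := by rw [Finset.sum_const, nsmul_eq_mul]
      _ = (2 * (H:ℝ)) * (4 * W ^ 2) := by rw [hcard]
  have hstep2 : Real.sqrt 3 * κ * γ⁻¹ * RB * RM * Real.sqrt S
      ≤ 5 * κ * γ⁻¹ * RB * RM * W * Real.sqrt H := by
    have hss : Real.sqrt 3 * Real.sqrt S ≤ 5 * W * Real.sqrt H := by
      rw [← Real.sqrt_mul (by norm_num : (0:ℝ) ≤ 3)]
      have h3S : 3 * S ≤ (5 * W) ^ 2 * (H:ℝ) := by nlinarith [hSW, sq_nonneg W]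
      calc Real.sqrt (3 * S) ≤ Real.sqrt ((5 * W) ^ 2 * (H:ℝ)) := Real.sqrt_le_sqrt h3S
        _ = 5 * W * Real.sqrt H := by
            rw [Real.sqrt_mul (sq_nonneg _), Real.sqrt_sq (by linarith)]
    calc Real.sqrt 3 * κ * γ⁻¹ * RB * RM * Real.sqrt S
        = (κ * γ⁻¹ * RB * RM) * (Real.sqrt 3 * Real.sqrt S) := by ring
      _ ≤ (κ * γ⁻¹ * RB * RM) * (5 * W * Real.sqrt H) := mul_le_mul_of_nonneg_left hss hK0
      _ = 5 * κ * γ⁻¹ * RB * RM * W * Real.sqrt H := by ring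
  exact ⟨hmain, hmain.trans hstep2⟩
end
end
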